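/- arXiv:2102.05279 — 5 statements merged into one kernel-verified Lean document; each statement's English description precedes it below -/
import Mathlib

section
/- Let A be the m×m matrix with diagonal entries 1 - 1/n and off-diagonal entries β p_i/n (entry in row i, column j, i ≠ j), where p_i > 0, Σ p_i = 1, β ≥ 0. Let g denote its Perron eigenvalue (the largest eigenvalue). Then for every t ∈ ℕ and every vector s ≥ 0, ‖Aᵗ s‖₁ ≤ gᵗ (Σᵢ sᵢ²/pᵢ)^{1/2}. -/
/-!
Conjugating by `D = diagonal (√pᵢ)` turns `A` into `C = D⁻¹ A D`, which has the spectrum of `A`, is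
symmetric because `A i j * p j = A j i * p i`, and has nonnegative entries. For a nonnegative
symmetric `C`, comparing `vᵀ C v` with `|v|ᵀ C |v|` shows that no eigenvalue lies below `-g`, so
the ℓ²-operator norm of `C`, its spectral radius, is at most `g`. By Cauchy–Schwarz and `∑ pᵢ = 1`,
`‖Aᵗ s‖₁ = ∑ √pᵢ |(Cᵗ D⁻¹ s)ᵢ| ≤ ‖Cᵗ D⁻¹ s‖₂ ≤ gᵗ ‖D⁻¹ s‖₂ = gᵗ (∑ sᵢ² / pᵢ)^(1/2)`.
-/

open Matrix WithLp

theorem Real.sum_abs_mul_le_sqrt_mul_sqrt {ι : Type*} (s : Finset ι) (f g : ι → ℝ) :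
    ∑ i ∈ s, |f i * g i| ≤ √(∑ i ∈ s, f i ^ 2) * √(∑ i ∈ s, g i ^ 2) := by
  simpa only [abs_mul, sq_abs] using Real.sum_mul_le_sqrt_mul_sqrt s (|f ·|) (|g ·|)

namespace Matrix

variable {n : Type*} [Fintype n]

theorem abs_dotProduct_mulVec_le_of_nonneg {C : Matrix n n ℝ} (hC : ∀ i j, 0 ≤ C i j)
    (v : n → ℝ) : |v ⬝ᵥ C *ᵥ v| ≤ |v| ⬝ᵥ C *ᵥ |v| := by
  simp only [dotProduct, mulVec, Finset.mul_sum, Pi.abs_apply]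
  refine (Finset.abs_sum_le_sum_abs _ _).trans (Finset.sum_le_sum fun i _ => ?_)
  refine (Finset.abs_sum_le_sum_abs _ _).trans (le_of_eq (Finset.sum_congr rfl fun j _ => ?_))
  rw [abs_mul, abs_mul, abs_of_nonneg (hC i j)]

variable [DecidableEq n]

section Field

variable {K : Type*} [Field K]

theorem exists_units_coe_eq_diagonal {q : n → K} (hq : ∀ i, q i ≠ 0) :
    ∃ u : (Matrix n n K)ˣ, ↑u = diagonal q ∧ ↑u⁻¹ = diagonal q⁻¹ :=
  ⟨Units.map (diagonalRingHom n K).toMonoidHom (MulEquiv.piUnits.symm fun i => .mk0 (q i) (hq i)),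
    by simp, by simp⟩

theorem spectrum_diagonal_inv_mul_mul_diagonal {q : n → K} (hq : ∀ i, q i ≠ 0)
    (A : Matrix n n K) : spectrum K (diagonal q⁻¹ * A * diagonal q) = spectrum K A := by
  obtain ⟨u, hu, hu_inv⟩ := exists_units_coe_eq_diagonal hq
  rw [← hu, ← hu_inv, spectrum.units_conjugate']

end Field

theorem isHermitian_diagonal_inv_mul_mul_diagonal {A : Matrix n n ℝ} {q : n → ℝ}
    (hA : ∀ i j, A i j * q j ^ 2 = A j i * q i ^ 2) :
    (diagonal q⁻¹ * A * diagonal q).IsHermitian := by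
  ext i j
  simp only [conjTranspose_apply, mul_diagonal, diagonal_mul, Pi.inv_apply, star_trivial]
  rcases eq_or_ne (q i) 0 with hi | hi
  · simp [hi]
  rcases eq_or_ne (q j) 0 with hj | hj
  · simp [hj]
  field_simp
  linarith [hA i j]

theorem IsHermitian.dotProduct_mulVec_le {C : Matrix n n ℝ} (hC : C.IsHermitian) {g : ℝ}
    (hg : ∀ μ ∈ spectrum ℝ C, μ ≤ g) (v : n → ℝ) : v ⬝ᵥ C *ᵥ v ≤ g * (v ⬝ᵥ v) := by
  have hpsd : (algebraMap ℝ _ g - C).PosSemidef := by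
    refine posSemidef_iff_isHermitian_and_spectrum_nonneg.2 ⟨?_, ?_⟩
    · exact (IsSelfAdjoint.algebraMap _ (.all g)).sub hC
    · rw [← spectrum.singleton_sub_eq]
      rintro _ ⟨_, rfl, μ, hμ, rfl⟩
      exact sub_nonneg.2 (hg μ hμ)
  simpa [sub_mulVec, Algebra.algebraMap_eq_smul_one, smul_mulVec, dotProduct_smul] using
    hpsd.dotProduct_mulVec_nonneg v

theorem IsHermitian.abs_le_of_mem_spectrum_of_nonneg {C : Matrix n n ℝ} (hC : C.IsHermitian)
    (hCnn : ∀ i j, 0 ≤ C i j) {g : ℝ} (hg : ∀ μ ∈ spectrum ℝ C, μ ≤ g) :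
    ∀ μ ∈ spectrum ℝ C, |μ| ≤ g := by
  intro μ hμ
  refine abs_le.2 ⟨?_, hg μ hμ⟩
  rw [← spectrum_toLin', ← Module.End.hasEigenvalue_iff_mem_spectrum] at hμ
  obtain ⟨v, hv⟩ := hμ.exists_hasEigenvector
  have hCv : v ⬝ᵥ C *ᵥ v = μ * (v ⬝ᵥ v) := by
    rw [show C *ᵥ v = μ • v by simpa using hv.apply_eq_smul, dotProduct_smul, smul_eq_mul]
  have hvv : 0 < v ⬝ᵥ v := by simpa using dotProduct_star_self_pos_iff.2 hv.2
  have habs : |v| ⬝ᵥ |v| = v ⬝ᵥ v := by simp [dotProduct, ← sq, sq_abs]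
  refine le_of_mul_le_mul_right ?_ hvv
  calc -g * (v ⬝ᵥ v) = -(g * (|v| ⬝ᵥ |v|)) := by rw [habs, neg_mul]
    _ ≤ -(|v| ⬝ᵥ C *ᵥ |v|) := neg_le_neg (hC.dotProduct_mulVec_le hg |v|)
    _ ≤ v ⬝ᵥ C *ᵥ v := neg_le_of_abs_le (abs_dotProduct_mulVec_le_of_nonneg hCnn v)
    _ = μ * (v ⬝ᵥ v) := hCv

variable {𝕜 : Type*} [RCLike 𝕜]

theorem IsHermitian.norm_mulVec_le {C : Matrix n n 𝕜} (hC : C.IsHermitian) {r : ℝ} (hr : 0 ≤ r)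
    (h : ∀ μ ∈ spectrum 𝕜 C, ‖μ‖ ≤ r) (x : n → 𝕜) :
    ‖toLp 2 (C *ᵥ x)‖ ≤ r * ‖toLp 2 x‖ := by
  set T := toEuclideanCLM (n := n) (𝕜 := 𝕜) C
  have hspec : spectrum 𝕜 T = spectrum 𝕜 C :=
    AlgEquiv.spectrum_eq (toEuclideanCLM (n := n) (𝕜 := 𝕜)).toAlgEquiv C
  have hrad : spectralRadius 𝕜 T ≤ ENNReal.ofReal r := by
    refine iSup₂_le fun μ hμ => ?_
    rw [hspec] at hμ
    rw [← norm_toNNReal]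
    exact ENNReal.coe_le_coe.2 (Real.toNNReal_le_toNNReal (h μ hμ))
  rw [T.spectralRadius_eq_nnnorm (IsSelfAdjoint.map hC _), ← norm_toNNReal, ← ENNReal.ofReal,
    ENNReal.ofReal_le_ofReal_iff hr] at hrad
  rw [← toEuclideanCLM_toLp]
  exact T.le_of_opNorm_le hrad _

theorem IsHermitian.norm_pow_mulVec_le {C : Matrix n n 𝕜} (hC : C.IsHermitian) {r : ℝ}
    (hr : 0 ≤ r) (h : ∀ μ ∈ spectrum 𝕜 C, ‖μ‖ ≤ r) (t : ℕ) (x : n → 𝕜) :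
    ‖toLp 2 ((C ^ t) *ᵥ x)‖ ≤ r ^ t * ‖toLp 2 x‖ := by
  induction t with
  | zero => simp
  | succ k ih =>
    rw [pow_succ', ← mulVec_mulVec, pow_succ', mul_assoc]
    exact (hC.norm_mulVec_le hr h _).trans (mul_le_mul_of_nonneg_left ih hr)

theorem sum_abs_pow_mulVec_le {A : Matrix n n ℝ} {q : n → ℝ} (hq : ∀ i, q i ≠ 0)
    (hC : (diagonal q⁻¹ * A * diagonal q).IsHermitian) {r : ℝ}
    (h : ∀ μ ∈ spectrum ℝ (diagonal q⁻¹ * A * diagonal q), |μ| ≤ r) (t : ℕ) (s : n → ℝ) :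
    ∑ i, |(A ^ t *ᵥ s) i| ≤ √(∑ i, q i ^ 2) * (r ^ t * √(∑ i, (s i / q i) ^ 2)) := by
  rcases isEmpty_or_nonempty n with hn | ⟨⟨i₀⟩⟩
  · simp
  set C := diagonal q⁻¹ * A * diagonal q
  have hr : 0 ≤ r := (abs_nonneg _).trans (h _ (hC.eigenvalues_mem_spectrum_real i₀))
  obtain ⟨u, hu, hu_inv⟩ := exists_units_coe_eq_diagonal hq
  have hAt : A ^ t *ᵥ s = diagonal q *ᵥ (C ^ t *ᵥ (diagonal q⁻¹ *ᵥ s)) := by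
    have hA : A = u * C * (u⁻¹ : (Matrix n n ℝ)ˣ) := by
      simp only [C, ← hu, ← hu_inv, mul_assoc, Units.mul_inv_cancel_left, Units.mul_inv, mul_one]
    rw [hA, Units.conj_pow, hu, hu_inv, mulVec_mulVec, mulVec_mulVec]
  have hnorm : ∀ v : n → ℝ, ‖toLp 2 v‖ = √(∑ i, v i ^ 2) := by simp [EuclideanSpace.norm_eq]
  calc ∑ i, |(A ^ t *ᵥ s) i|
      ≤ √(∑ i, q i ^ 2) * ‖toLp 2 (C ^ t *ᵥ (diagonal q⁻¹ *ᵥ s))‖ := by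
        simpa only [hAt, mulVec_diagonal, hnorm] using
          Real.sum_abs_mul_le_sqrt_mul_sqrt Finset.univ q _
    _ ≤ √(∑ i, q i ^ 2) * (r ^ t * ‖toLp 2 (diagonal q⁻¹ *ᵥ s)‖) := by
        gcongr
        exact hC.norm_pow_mulVec_le hr h t _
    _ = √(∑ i, q i ^ 2) * (r ^ t * √(∑ i, (s i / q i) ^ 2)) := by
        simp [hnorm, mulVec_diagonal, div_eq_inv_mul]

end Matrix

theorem l1_norm_pow_mulVec_le_general {m n : ℕ} (hn : 1 ≤ n) (p : Fin m → ℝ) (hp : ∀ i, 0 < p i)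
    (hp1 : ∑ i, p i = 1) (β : ℝ) (hβ : 0 ≤ β)
    (A : Matrix (Fin m) (Fin m) ℝ)
    (hA : ∀ i j, A i j = if i = j then 1 - 1 / (n : ℝ) else β * p i / n)
    (g : ℝ) (hgmax : ∀ μ : ℝ, Module.End.HasEigenvalue (Matrix.toLin' A) μ → μ ≤ g) :
    ∀ (t : ℕ) (s : Fin m → ℝ), (∀ i, 0 ≤ s i) →
      ∑ i, |((A ^ t).mulVec s) i| ≤ g ^ t * Real.sqrt (∑ i, s i ^ 2 / p i) := by
  intro t s _
  set q : Fin m → ℝ := fun i => √(p i)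
  have hq : ∀ i, 0 < q i := fun i => Real.sqrt_pos.2 (hp i)
  have hq2 : ∀ i, q i ^ 2 = p i := fun i => Real.sq_sqrt (hp i).le
  have hC : (diagonal q⁻¹ * A * diagonal q).IsHermitian := by
    refine isHermitian_diagonal_inv_mul_mul_diagonal fun i j => ?_
    rcases eq_or_ne i j with rfl | hij
    · rfl
    · simp only [hA, hq2, if_neg hij, if_neg hij.symm]
      ring
  have hCnn : ∀ i j, 0 ≤ (diagonal q⁻¹ * A * diagonal q) i j := by
    have : 0 ≤ 1 - (1 : ℝ) / n := sub_nonneg.2 (div_le_one_of_le₀ (mod_cast hn) n.cast_nonneg)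
    intro i j
    simp only [mul_diagonal, diagonal_mul, Pi.inv_apply, hA]
    split_ifs
    · positivity
    · have := hp i; positivity
  have hle : ∀ μ ∈ spectrum ℝ (diagonal q⁻¹ * A * diagonal q), μ ≤ g := by
    rw [spectrum_diagonal_inv_mul_mul_diagonal (fun i => (hq i).ne')]
    exact fun μ hμ => hgmax μ (by rwa [Module.End.hasEigenvalue_iff_mem_spectrum, spectrum_toLin'])
  calc ∑ i, |(A ^ t *ᵥ s) i|
      ≤ √(∑ i, q i ^ 2) * (g ^ t * √(∑ i, (s i / q i) ^ 2)) :=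
        sum_abs_pow_mulVec_le (fun i => (hq i).ne') hC
          (hC.abs_le_of_mem_spectrum_of_nonneg hCnn hle) t s
    _ = g ^ t * √(∑ i, s i ^ 2 / p i) := by simp only [hq2, hp1, div_pow, Real.sqrt_one, one_mul]

/-- For the matrix A with diagonal entries 1 - 1/n and off-diagonal (i,j) entries β pᵢ/n,
with Perron (largest) eigenvalue g, and any componentwise nonnegative vector s,
‖Aᵗ s‖₁ ≤ gᵗ √(Σᵢ sᵢ²/pᵢ). -/
theorem l1_norm_pow_mulVec_le {m n : ℕ} (hn : 1 ≤ n) (p : Fin m → ℝ) (hp : ∀ i, 0 < p i)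
    (hp1 : ∑ i, p i = 1) (β : ℝ) (hβ : 0 ≤ β)
    (A : Matrix (Fin m) (Fin m) ℝ)
    (hA : ∀ i j, A i j = if i = j then 1 - 1 / (n : ℝ) else β * p i / n)
    (g : ℝ) (hg : Module.End.HasEigenvalue (Matrix.toLin' A) g)
    (hgmax : ∀ μ : ℝ, Module.End.HasEigenvalue (Matrix.toLin' A) μ → μ ≤ g) :
    ∀ (t : ℕ) (s : Fin m → ℝ), (∀ i, 0 ≤ s i) →
      ∑ i, |((A ^ t).mulVec s) i| ≤ g ^ t * Real.sqrt (∑ i, s i ^ 2 / p i) :=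
  l1_norm_pow_mulVec_le_general hn p hp hp1 β hβ A hA g hgmax
end

section
/- With A, g, a as above and assuming p₁ ≤ p₂ ≤ … ≤ p_m: for any i < j one has (β pᵢ + 1 - υ) aᵢ = (β pⱼ + 1 - υ) aⱼ where υ = n(1-g), and consequently a₁ ≥ a₂ ≥ … ≥ a_m. -/
/-!
Since the off-diagonal entries of A depend only on the row, the `j`-th coordinate of
`aᵀ A = g aᵀ` reads `(β pⱼ + 1 - υ) aⱼ = β ∑ᵢ aᵢ pᵢ`, a positive quantity independent of `j`.
As the coefficient `β pⱼ + 1 - υ` increases with `j`, `aⱼ` must decrease.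
-/

open Matrix

theorem vecMul_apply_of_eq_ite {ι R : Type*} [Fintype ι] [DecidableEq ι] [CommRing R]
    {A : Matrix ι ι R} {d : R} {u : ι → R} (hA : ∀ i j, A i j = if i = j then d else u i)
    (a : ι → R) (j : ι) :
    (a ᵥ* A) j = (d - u j) * a j + a ⬝ᵥ u := by
  have hA' : A = diagonal (fun i => d - u i) + of fun i _ => u i := by
    ext i j
    rw [hA, Matrix.add_apply, diagonal_apply, of_apply]
    split_ifs <;> ring
  rw [hA', vecMul_add, Pi.add_apply, vecMul_diagonal, mul_comm]
  rfl

theorem antitone_of_mul_eq_const {ι : Type*} [Preorder ι] {c a : ι → ℝ} {K : ℝ}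
    (hK : 0 < K) (hc : Monotone c) (ha : ∀ i, 0 < a i) (h : ∀ i, c i * a i = K) :
    Antitone a := by
  intro i j hij
  rw [← div_le_div_iff_of_pos_left hK (ha i) (ha j)]
  calc K / a i = c i := (eq_div_of_mul_eq (ha i).ne' (h i)).symm
    _ ≤ c j := hc hij
    _ = K / a j := eq_div_of_mul_eq (ha j).ne' (h j)

theorem left_eigenvector_antitone_general {m n : ℕ} (hn : 1 ≤ n) (p : Fin m → ℝ)
    (hp : ∀ i, 0 < p i) (hp_mono : Monotone p)
    (β : ℝ) (hβ : 0 < β)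
    (A : Matrix (Fin m) (Fin m) ℝ)
    (hA : ∀ i j, A i j = if i = j then 1 - 1 / (n : ℝ) else β * p i / n)
    (g : ℝ) (a : Fin m → ℝ) (ha_pos : ∀ i, 0 < a i)
    (ha : Matrix.vecMul a A = g • a) :
    (∀ i j : Fin m, i < j →
        (β * p i + 1 - (n : ℝ) * (1 - g)) * a i
          = (β * p j + 1 - (n : ℝ) * (1 - g)) * a j) ∧
      Antitone a := by
  have hn0 : (n : ℝ) ≠ 0 := by positivity
  have key (j : Fin m) : (β * p j + 1 - n * (1 - g)) * a j = β * (a ⬝ᵥ p) := by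
    have h := congrFun ha j
    rw [vecMul_apply_of_eq_ite hA, Pi.smul_apply, smul_eq_mul,
      show (fun i => β * p i / n) = (β / n) • p by
        ext; simp only [Pi.smul_apply, smul_eq_mul]; ring, dotProduct_smul,
      smul_eq_mul] at h
    field_simp at h
    linarith
  refine ⟨fun i j _ => (key i).trans (key j).symm, fun i j hij => ?_⟩
  have hK : 0 < β * (a ⬝ᵥ p) :=
    mul_pos hβ (Finset.sum_pos (fun k _ => mul_pos (ha_pos k) (hp k)) ⟨i, Finset.mem_univ i⟩)
  refine antitone_of_mul_eq_const hK (fun k l hkl => ?_) ha_pos key hij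
  gcongr
  exact hp_mono hkl

/-- If p₁ ≤ … ≤ p_m, then with υ = n(1-g) one has
(β pᵢ + 1 - υ) aᵢ = (β pⱼ + 1 - υ) aⱼ for i < j, and a is nonincreasing,
where aᵀ is the positive ℓ¹-normalized left Perron eigenvector of A. -/
theorem left_eigenvector_antitone {m n : ℕ} (hn : 1 ≤ n) (p : Fin m → ℝ)
    (hp : ∀ i, 0 < p i) (hp1 : ∑ i, p i = 1) (hp_mono : Monotone p)
    (β : ℝ) (hβ : 0 < β)
    (A : Matrix (Fin m) (Fin m) ℝ)
    (hA : ∀ i j, A i j = if i = j then 1 - 1 / (n : ℝ) else β * p i / n)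
    (g : ℝ) (a : Fin m → ℝ) (ha_pos : ∀ i, 0 < a i) (ha1 : ∑ i, a i = 1)
    (ha : Matrix.vecMul a A = g • a) :
    (∀ i j : Fin m, i < j →
        (β * p i + 1 - (n : ℝ) * (1 - g)) * a i
          = (β * p j + 1 - (n : ℝ) * (1 - g)) * a j) ∧
      Antitone a :=
  left_eigenvector_antitone_general hn p hp hp_mono β hβ A hA g a ha_pos ha
end

section
/- Let (W_t)_{t≥0} be a non-negative supermartingale adapted to a filtration (F_t), and τ a stopping time such that W₀ = k, the increments satisfy W_{t+1} - W_t ≤ B for a constant B < ∞, and Var(W_{t+1} | F_t) > σ² > 0 on the event {τ > t}. Then for every u > 4B²/(3σ²), P(τ > u) ≤ 4k/(σ√u). -/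
/-!
Put `a = σ √u` (the hypothesis on `u` gives `B < a`), `λ = max B (a / 2)` and `n = ⌈u⌉`, and let
`π` be the first time before `n` at which `W ≥ λ`. On `{τ ≥ n}`, either `π < n`, which by optional
stopping and Markov's inequality has probability at most `k / λ`, or `ρ = min τ π ≥ n`. Before `ρ`,
the conditional bias–variance decomposition and the supermartingale property make
`(λ - W_{t ∧ ρ})²` gain at least `σ²` in conditional expectation at each step; since the overshoot
at `π` is at most `B ≤ λ`, this square stays below `λ²`. Hence `σ² n P(ρ ≥ n) ≤ λ² - (λ - k)²`,
i.e. `P(ρ ≥ n) ≤ 2kλ / (σ² n)`, and for our `λ` both bounds are at most `2k / a`.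
-/

open MeasureTheory ProbabilityTheory

namespace ProbabilityTheory

variable {Ω : Type*} {mΩ : MeasurableSpace Ω} {μ : Measure Ω}

lemma condExp_const_sub_sq_ae_eq {m : MeasurableSpace Ω} [IsFiniteMeasure μ] (hm : m ≤ mΩ)
    {X : Ω → ℝ} (hX : MemLp X 2 μ) (c : ℝ) :
    μ[fun ω => (c - X ω) ^ 2|m] =ᵐ[μ] fun ω => (c - μ[X|m] ω) ^ 2 + Var[X; μ | m] ω := by
  set Y : Ω → ℝ := fun ω => c - X ω
  have hcondY : μ[Y|m] =ᵐ[μ] fun ω => c - μ[X|m] ω := by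
    have h := condExp_sub (integrable_const c) (hX.integrable one_le_two) m
    rwa [condExp_const hm] at h
  have hvarY : Var[Y; μ | m] =ᵐ[μ] Var[X; μ | m] := by
    refine condExp_congr_ae ?_
    filter_upwards [hcondY] with ω hω
    simp only [Y, Pi.pow_apply, Pi.sub_apply, hω]
    ring
  have hY : MemLp Y 2 μ := (memLp_const c).sub hX
  filter_upwards [condVar_ae_eq_condExp_sq_sub_sq_condExp hm hY, hcondY, hvarY]
    with ω hω hcond hvar
  simp only [Pi.sub_apply, Pi.pow_apply, hcond, hvar] at hω
  change μ[Y ^ 2|m] ω = _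
  linarith

end ProbabilityTheory

lemma le_add_mul_of_forall_sub_le {a : ℕ → ℝ} {B : ℝ} (h : ∀ t, a (t + 1) - a t ≤ B) (t : ℕ) :
    a t ≤ a 0 + t * B := by
  induction t with
  | zero => simp
  | succ t ih => push_cast; linarith [h t]

namespace MeasureTheory

variable {Ω : Type*} {mΩ : MeasurableSpace Ω} {μ : Measure Ω} {ℱ : Filtration ℕ mΩ}

lemma memLp_of_nonneg_of_sub_le [IsFiniteMeasure μ] {W : ℕ → Ω → ℝ} {k B : ℝ}
    (hW_meas : ∀ t, AEStronglyMeasurable (W t) μ) (hW_nonneg : ∀ t ω, 0 ≤ W t ω)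
    (hk : ∀ ω, W 0 ω ≤ k) (hB : ∀ t ω, W (t + 1) ω - W t ω ≤ B) (p : ENNReal) (t : ℕ) :
    MemLp (W t) p μ := by
  refine MemLp.of_bound (hW_meas t) (k + t * B) (ae_of_all _ fun ω => ?_)
  rw [Real.norm_of_nonneg (hW_nonneg t ω)]
  linarith [le_add_mul_of_forall_sub_le (a := fun s => W s ω) (fun s => hB s ω) t, hk ω]

lemma stoppedProcess_natCast_apply {β : Type*} (u : ℕ → Ω → β) (ρ : Ω → ℕ) (n : ℕ) (ω : Ω) :
    stoppedProcess u (fun ω => (ρ ω : WithTop ℕ)) n ω = u (min n (ρ ω)) ω := by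
  -- `(ρ ω : WithTop ℕ)` elaborates to `Nat.cast`, the `WithTop` API is about `WithTop.some`
  rw [stoppedProcess, show ((ρ ω : ℕ) : WithTop ℕ) = WithTop.some (ρ ω) from rfl,
    ← WithTop.coe_min]
  rfl

lemma le_of_le_hittingBtwn {W : ℕ → Ω → ℝ} {B c d : ℝ} (hB : ∀ t ω, W (t + 1) ω - W t ω ≤ B)
    {ω : Ω} (h0 : W 0 ω ≤ d) (hcd : c + B ≤ d) {j n : ℕ}
    (hj : j ≤ hittingBtwn W (Set.Ici c) 0 n ω) : W j ω ≤ d := by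
  cases j with
  | zero => exact h0
  | succ j =>
    have hbelow : W j ω < c := by
      simpa using notMem_of_lt_hittingBtwn (Nat.lt_of_succ_le hj) (Nat.zero_le j)
    linarith [hB j ω]

lemma integral_stoppedProcess_add_one [IsFiniteMeasure μ] {X : ℕ → Ω → ℝ}
    (hX : ∀ t, Integrable (X t) μ) {ρ : Ω → WithTop ℕ} (hρ : IsStoppingTime ℱ ρ) (t : ℕ) :
    ∫ ω, stoppedProcess X ρ (t + 1) ω ∂μ =
      ∫ ω, stoppedProcess X ρ t ω ∂μ + ∫ ω in {ω | t < ρ ω}, (X (t + 1) ω - X t ω) ∂μ := by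
  set E := {ω | (t : WithTop ℕ) < ρ ω}
  have hE : MeasurableSet E := ℱ.le t _ (hρ.measurableSet_gt t)
  have hsplit : ∀ ω, stoppedProcess X ρ (t + 1) ω =
      stoppedProcess X ρ t ω + E.indicator (fun ω => X (t + 1) ω - X t ω) ω := by
    intro ω
    by_cases h : ω ∈ E
    · have h' : ((t + 1 : ℕ) : WithTop ℕ) ≤ ρ ω := ENat.natCast_add_one_le_iff.2 h
      rw [Set.indicator_of_mem h, stoppedProcess_eq_of_le (i := t) h.le,
        stoppedProcess_eq_of_le (i := t + 1) h']
      ring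
    · have h' : ρ ω ≤ t := not_lt.1 h
      rw [Set.indicator_of_notMem h, stoppedProcess_eq_of_ge (i := t) h',
        stoppedProcess_eq_of_ge (i := t + 1) (h'.trans (by simp)), add_zero]
  have hincr : Integrable (fun ω => X (t + 1) ω - X t ω) μ := (hX _).sub (hX t)
  simp_rw [hsplit]
  rw [integral_add (integrable_stoppedProcess hρ hX t) (hincr.indicator hE),
    integral_indicator hE]

lemma le_integral_stoppedProcess_of_drift [IsFiniteMeasure μ] {X : ℕ → Ω → ℝ}
    (hX : ∀ t, Integrable (X t) μ) {ρ : Ω → WithTop ℕ} (hρ : IsStoppingTime ℱ ρ) {δ : ℝ} {n : ℕ}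
    (hdrift : ∀ t < n, ∀ᵐ ω ∂μ, t < ρ ω → X t ω + δ ≤ μ[X (t + 1)|ℱ t] ω) :
    ∫ ω, X 0 ω ∂μ + δ * ∑ t ∈ Finset.range n, μ.real {ω | t < ρ ω} ≤
      ∫ ω, stoppedProcess X ρ n ω ∂μ := by
  induction n with
  | zero => simp [stoppedProcess_eq_of_le]
  | succ n ih =>
    set E := {ω | (n : WithTop ℕ) < ρ ω}
    have hE : MeasurableSet[ℱ n] E := hρ.measurableSet_gt n
    have hstep : ∫ ω in E, (X n ω + δ) ∂μ ≤ ∫ ω in E, X (n + 1) ω ∂μ := calc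
      _ ≤ ∫ ω in E, μ[X (n + 1)|ℱ n] ω ∂μ :=
        setIntegral_mono_on_ae ((hX n).add (integrable_const δ)).integrableOn
          integrable_condExp.integrableOn (ℱ.le n _ hE) (hdrift n n.lt_succ_self)
      _ = _ := setIntegral_condExp (ℱ.le n) (hX _) hE
    rw [integral_add (hX n).integrableOn (integrable_const δ).integrableOn, setIntegral_const,
      smul_eq_mul] at hstep
    rw [integral_stoppedProcess_add_one hX hρ, integral_sub (hX _).integrableOn (hX n).integrableOn,
      Finset.sum_range_succ]
    linarith [ih fun t ht => hdrift t (ht.trans n.lt_succ_self)]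

namespace Supermartingale

variable {W : ℕ → Ω → ℝ}

lemma sq_const_sub_add_condVar_le [IsFiniteMeasure μ] (hW : Supermartingale W ℱ μ) {i j : ℕ}
    (hij : i ≤ j) (hWj : MemLp (W j) 2 μ) (c : ℝ) :
    ∀ᵐ ω ∂μ, W i ω ≤ c →
      (c - W i ω) ^ 2 + Var[W j; μ | ℱ i] ω ≤ μ[fun ω => (c - W j ω) ^ 2|ℱ i] ω := by
  filter_upwards [hW.condExp_ae_le hij, condExp_const_sub_sq_ae_eq (ℱ.le i) hWj c]
    with ω hcond heq hWc
  rw [heq]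
  gcongr

lemma le_integral_sq_const_sub_stoppedProcess [IsFiniteMeasure μ] (hW : Supermartingale W ℱ μ)
    (hW2 : ∀ t, MemLp (W t) 2 μ) {ρ : Ω → WithTop ℕ} (hρ : IsStoppingTime ℱ ρ) {c δ : ℝ} {n : ℕ}
    (hbelow : ∀ t < n, ∀ᵐ ω ∂μ, t < ρ ω → W t ω ≤ c ∧ δ ≤ Var[W (t + 1); μ | ℱ t] ω) :
    ∫ ω, (c - W 0 ω) ^ 2 ∂μ + δ * ∑ t ∈ Finset.range n, μ.real {ω | t < ρ ω} ≤
      ∫ ω, (c - stoppedProcess W ρ n ω) ^ 2 ∂μ := by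
  refine le_integral_stoppedProcess_of_drift (X := fun t ω => (c - W t ω) ^ 2)
    (fun t => ((memLp_const c).sub (hW2 t)).integrable_sq) hρ fun t ht => ?_
  filter_upwards [hbelow t ht, hW.sq_const_sub_add_condVar_le t.le_succ (hW2 _) c]
    with ω hω hstep hρt
  obtain ⟨hWc, hδ⟩ := hω hρt
  linarith [hstep hWc]

lemma mul_meas_ge_stoppedValue_le_integral [IsFiniteMeasure μ] (hW : Supermartingale W ℱ μ)
    (hW_nonneg : ∀ t ω, 0 ≤ W t ω) {π : Ω → WithTop ℕ} (hπ : IsStoppingTime ℱ π) {N : ℕ}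
    (hπN : ∀ ω, π ω ≤ N) (c : ℝ) :
    c * μ.real {ω | c ≤ stoppedValue W π ω} ≤ ∫ ω, W 0 ω ∂μ := by
  have hOST := hW.neg.expected_stoppedValue_mono (isStoppingTime_const ℱ 0) hπ
    (fun ω => zero_le) hπN
  simp only [stoppedValue_neg, stoppedValue_const, integral_neg, Pi.neg_apply, neg_le_neg_iff]
    at hOST
  exact (mul_meas_ge_le_integral_of_nonneg (ae_of_all _ fun ω => hW_nonneg _ _)
    (integrable_stoppedValue ℕ hπ hW.integrable hπN) c).trans hOST

end Supermartingale

end MeasureTheory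

lemma div_add_mul_div_le_four_mul_div {k a lam s : ℝ} (hk : 0 ≤ k) (ha : 0 < a)
    (hlam : a / 2 ≤ lam) (hlam_le : lam ≤ a) (hs : a ^ 2 ≤ s) :
    k / lam + 2 * k * lam / s ≤ 4 * k / a := by
  have h1 : k / lam ≤ 2 * k / a := by
    rw [div_le_div_iff₀ (by linarith) ha]
    nlinarith
  have h2 : 2 * k * lam / s ≤ 2 * k / a := by
    rw [div_le_div_iff₀ (lt_of_lt_of_le (by positivity) hs) ha]
    nlinarith [mul_le_mul_of_nonneg_right hlam_le ha.le]
  calc _ ≤ 2 * k / a + 2 * k / a := add_le_add h1 h2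
    _ = 4 * k / a := by ring

section

variable {Ω : Type*} {mΩ : MeasurableSpace Ω} {μ : Measure Ω} {ℱ : Filtration ℕ mΩ}

lemma sq_mul_measureReal_le_min_hittingBtwn_le [IsProbabilityMeasure μ] {W : ℕ → Ω → ℝ}
    {τ : Ω → ℕ} (hW : Supermartingale W ℱ μ) (hW_nonneg : ∀ t ω, 0 ≤ W t ω)
    (hτ : IsStoppingTime ℱ (fun ω => (τ ω : WithTop ℕ))) {k B σ lam : ℝ} (hk : ∀ ω, W 0 ω = k)
    (hB : ∀ t ω, W (t + 1) ω - W t ω ≤ B)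
    (hvar : ∀ t : ℕ, ∀ᵐ ω ∂μ, t < τ ω → σ ^ 2 < Var[W (t + 1); μ | ℱ t] ω)
    (hBlam : B ≤ lam) (hklam : k ≤ 2 * lam) (n : ℕ) :
    σ ^ 2 * n * μ.real {ω | n ≤ min (τ ω) (hittingBtwn W (Set.Ici lam) 0 n ω)} ≤ 2 * k * lam := by
  set π := hittingBtwn W (Set.Ici lam) 0 n
  set ρ : Ω → ℕ := fun ω => min (τ ω) (π ω)
  have hπ : IsStoppingTime ℱ (fun ω => (π ω : WithTop ℕ)) :=
    hW.stronglyAdapted.adapted.isStoppingTime_hittingBtwn measurableSet_Ici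
  have hρ : IsStoppingTime ℱ (fun ω => (ρ ω : WithTop ℕ)) := by
    rw [show (fun ω => (ρ ω : WithTop ℕ)) = fun ω => min (τ ω : WithTop ℕ) (π ω) from
      funext fun ω => WithTop.coe_min _ _]
    exact hτ.min hπ
  have hsum : n * μ.real {ω | n ≤ ρ ω} ≤
      ∑ t ∈ Finset.range n, μ.real {ω | t < ρ ω} := by
    simpa using Finset.card_nsmul_le_sum (Finset.range n) _ _ fun t ht =>
      measureReal_mono fun ω hω => by simp_all; omega
  have hW2 : ∀ t, MemLp (W t) 2 μ := memLp_of_nonneg_of_sub_le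
    (fun t => (hW.integrable t).aestronglyMeasurable) hW_nonneg (fun ω => (hk ω).le) hB 2
  have hdrift := hW.le_integral_sq_const_sub_stoppedProcess hW2 hρ (c := lam) (δ := σ ^ 2)
      (n := n) fun t _ => by
    filter_upwards [hvar t] with ω hω hρt
    have hρt' : t < τ ω ∧ t < π ω := by simpa [ρ] using hρt
    have hWt : W t ω < lam := by simpa using notMem_of_lt_hittingBtwn hρt'.2 (Nat.zero_le t)
    exact ⟨hWt.le, (hω hρt'.1).le⟩
  have hend : ∀ ω, (lam - stoppedProcess W (fun ω => (ρ ω : WithTop ℕ)) n ω) ^ 2 ≤ lam ^ 2 := by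
    intro ω
    rw [stoppedProcess_natCast_apply]
    have hZ_nonneg := hW_nonneg (min n (ρ ω)) ω
    have hZ_le := le_of_le_hittingBtwn hB ((hk ω).trans_le hklam) (by linarith : lam + B ≤ 2 * lam)
      ((min_le_right _ _).trans (min_le_right _ _) : min n (ρ ω) ≤ π ω)
    nlinarith
  have hint := integral_mono (((memLp_const lam).sub (memLp_stoppedProcess hρ hW2 n)).integrable_sq)
    (integrable_const _) hend
  simp only [hk, integral_const, probReal_univ, smul_eq_mul, one_mul, Nat.cast_lt,
    Pi.sub_apply] at hdrift hint
  show σ ^ 2 * n * μ.real {ω | n ≤ ρ ω} ≤ _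
  nlinarith [sq_nonneg k, mul_le_mul_of_nonneg_left hsum (sq_nonneg σ)]

lemma measureReal_le_stoppingTime_le [IsProbabilityMeasure μ] {W : ℕ → Ω → ℝ} {τ : Ω → ℕ}
    (hW : Supermartingale W ℱ μ) (hW_nonneg : ∀ t ω, 0 ≤ W t ω)
    (hτ : IsStoppingTime ℱ (fun ω => (τ ω : WithTop ℕ))) {k B σ lam : ℝ} (hk : ∀ ω, W 0 ω = k)
    (hB : ∀ t ω, W (t + 1) ω - W t ω ≤ B) (hσ : 0 < σ)
    (hvar : ∀ t : ℕ, ∀ᵐ ω ∂μ, t < τ ω → σ ^ 2 < Var[W (t + 1); μ | ℱ t] ω)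
    (hlam : 0 < lam) (hBlam : B ≤ lam) (hklam : k ≤ 2 * lam) {n : ℕ} (hn : 0 < n) :
    μ.real {ω | n ≤ τ ω} ≤ k / lam + 2 * k * lam / (σ ^ 2 * n) := by
  set π := hittingBtwn W (Set.Ici lam) 0 n
  have hπ : IsStoppingTime ℱ (fun ω => (π ω : WithTop ℕ)) :=
    hW.stronglyAdapted.adapted.isStoppingTime_hittingBtwn measurableSet_Ici
  have hhit : lam * μ.real {ω | π ω < n} ≤ k := calc
    _ ≤ lam * μ.real {ω | lam ≤ stoppedValue W (fun ω => (π ω : WithTop ℕ)) ω} :=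
      mul_le_mul_of_nonneg_left
        (measureReal_mono fun ω hω => hittingBtwn_mem_set_of_hittingBtwn_lt hω) hlam.le
    _ ≤ ∫ ω, W 0 ω ∂μ := hW.mul_meas_ge_stoppedValue_le_integral hW_nonneg hπ
      (fun ω => by exact_mod_cast (hittingBtwn_le ω : π ω ≤ n)) lam
    _ = k := by simp [hk]
  have hsurvive :=
    sq_mul_measureReal_le_min_hittingBtwn_le hW hW_nonneg hτ hk hB hvar hBlam hklam n
  have hsplit : μ.real {ω | n ≤ τ ω} ≤
      μ.real {ω | π ω < n} + μ.real {ω | n ≤ min (τ ω) (π ω)} :=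
    (measureReal_mono fun ω (hω : n ≤ τ ω) => by
      simp only [Set.mem_union, Set.mem_ofPred_eq]; omega).trans (measureReal_union_le _ _)
  have h1 : μ.real {ω | π ω < n} ≤ k / lam := by rw [le_div_iff₀ hlam]; linarith
  have h2 : μ.real {ω | n ≤ min (τ ω) (π ω)} ≤ 2 * k * lam / (σ ^ 2 * n) := by
    rw [le_div_iff₀ (by positivity)]; linarith
  linarith

end

/-- A non-negative supermartingale starting at k with increments bounded by B and
conditional variance > σ² before the stopping time τ satisfies
P(τ > u) ≤ 4k/(σ√u) for u > 4B²/(3σ²). -/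
theorem supermartingale_stopping_time_tail {Ω : Type*} {mΩ : MeasurableSpace Ω}
    {μ : Measure Ω} [IsProbabilityMeasure μ]
    (ℱ : Filtration ℕ mΩ) (W : ℕ → Ω → ℝ) (τ : Ω → ℕ)
    (hW : Supermartingale W ℱ μ) (hW_nonneg : ∀ t ω, 0 ≤ W t ω)
    (hτ : IsStoppingTime ℱ (fun ω => (τ ω : WithTop ℕ)))
    (k B σ : ℝ) (hk : ∀ ω, W 0 ω = k)
    (hB : ∀ t ω, W (t + 1) ω - W t ω ≤ B)
    (hσ : 0 < σ)
    (hvar : ∀ t : ℕ, ∀ᵐ ω ∂μ, t < τ ω →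
      σ ^ 2 < (μ[fun ω' => (W (t + 1) ω' - (μ[W (t + 1)|ℱ t]) ω') ^ 2|ℱ t]) ω) :
    ∀ u : ℝ, 4 * B ^ 2 / (3 * σ ^ 2) < u →
      (μ {ω | u < (τ ω : ℝ)}).toReal ≤ 4 * k / (σ * Real.sqrt u) := by
  intro u hu
  have hk0 : 0 ≤ k := hk (nonempty_of_isProbabilityMeasure μ).some ▸ hW_nonneg 0 _
  have hu0 : 0 < u := lt_of_le_of_lt (by positivity) hu
  set a := σ * Real.sqrt u
  have ha : 0 < a := by positivity
  have hσu : σ ^ 2 * u = a ^ 2 := by rw [mul_pow, Real.sq_sqrt hu0.le]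
  rcases le_or_gt a (4 * k) with hak | hak
  · calc (μ {ω | u < (τ ω : ℝ)}).toReal ≤ 1 := measureReal_le_one
      _ ≤ 4 * k / a := by rw [le_div_iff₀ ha]; linarith
  have hBa : B < a := by
    rw [div_lt_iff₀ (by positivity)] at hu
    nlinarith
  set lam := max B (a / 2)
  have hlam : a / 2 ≤ lam := le_max_right _ _
  calc (μ {ω | u < (τ ω : ℝ)}).toReal ≤ μ.real {ω | ⌈u⌉₊ ≤ τ ω} :=
        measureReal_mono fun ω (hω : u < τ ω) => Nat.ceil_le.2 hω.le
    _ ≤ k / lam + 2 * k * lam / (σ ^ 2 * ⌈u⌉₊) :=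
        measureReal_le_stoppingTime_le hW hW_nonneg hτ hk hB hσ hvar (by linarith)
          (le_max_left _ _) (by linarith) (Nat.ceil_pos.2 hu0)
    _ ≤ 4 * k / a := div_add_mul_div_le_four_mul_div hk0 ha hlam (max_le hBa.le (by linarith))
        (hσu ▸ mul_le_mul_of_nonneg_left (Nat.le_ceil u) (sq_nonneg σ))
end

section
/- Let (Z_t)_{t≥0} be a Markov chain on a finite state space S̃ ⊆ ℝ^m. Suppose there exists 0 < r < 1 such that for all θ, θ' ∈ S̃ and all t, ‖E_θ[Z_t] - E_{θ'}[Z_t]‖₁ ≤ rᵗ ‖θ - θ'‖₁. Then sup_{θ} Var_θ(Z_t) ≤ m · (sup_θ Var_θ(Z₁)) · min{t, (1 - r²)^{-1}}, where Var denotes the ℓ²-variance Var_θ(Z_t) = E_θ‖Z_t - E_θ Z_t‖₂². -/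
/-!
Conditioning on the first step, the law of total variance gives
`Var_θ Z_{s+1} = E_θ[Var_{Z₁} Z_s] + Var_θ(E_{Z₁} Z_s)`, and the second term equals
`½ E_θ ‖E_{Z₁} Z_s - E_{Z₁'} Z_s‖₂²` for an independent copy `Z₁'` of `Z₁`. The ℓ¹-contraction
together with `‖x‖₂ ≤ ‖x‖₁ ≤ √m ‖x‖₂` bounds it by
`m r^{2s} · ½ E_θ ‖Z₁ - Z₁'‖₂² = m r^{2s} Var_θ Z₁`.
Hence `sup Var Z_{s+1} ≤ sup Var Z_s + m r^{2s} sup Var Z₁`, and summing,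
`sup Var Z_t ≤ m sup Var Z₁ ∑_{k<t} r^{2k} ≤ m sup Var Z₁ min{t, (1 - r²)⁻¹}`.
-/

/-- Expectation of the chain at time t started at θ: E_θ[Z_t] ∈ ℝ^m, where the chain on a
finite state space α with transition matrix P is observed through the embedding ι : α → ℝ^m. -/
noncomputable def chainExp {α : Type*} [Fintype α] [DecidableEq α] {m : ℕ} (P : Matrix α α ℝ)
    (ι : α → Fin m → ℝ) (t : ℕ) (θ : α) : Fin m → ℝ :=
  fun i => ∑ x, (P ^ t) θ x * ι x i

/-- The ℓ²-variance Var_θ(Z_t) = E_θ‖Z_t - E_θ Z_t‖₂². -/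
noncomputable def chainVar {α : Type*} [Fintype α] [DecidableEq α] {m : ℕ} (P : Matrix α α ℝ)
    (ι : α → Fin m → ℝ) (t : ℕ) (θ : α) : ℝ :=
  ∑ x, (P ^ t) θ x * ∑ i, (ι x i - chainExp P ι t θ i) ^ 2

open Finset Matrix

section WeightedSums

variable {α : Type*} [Fintype α] {p : α → ℝ}

theorem sum_mul_sub_sq_eq_add (hp : ∑ x, p x = 1) (g : α → ℝ) (c : ℝ) :
    ∑ x, p x * (g x - c) ^ 2 =
      ∑ x, p x * (g x - ∑ y, p y * g y) ^ 2 + (∑ y, p y * g y - c) ^ 2 := by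
  have expand : ∀ c, ∑ x, p x * (g x - c) ^ 2
      = ∑ x, p x * g x ^ 2 - 2 * c * ∑ x, p x * g x + c ^ 2 := fun c => by
    have h (x : α) : p x * (g x - c) ^ 2 = p x * g x ^ 2 - 2 * c * (p x * g x) + c ^ 2 * p x := by
      ring
    simp only [h, sum_add_distrib, sum_sub_distrib, ← mul_sum, hp, mul_one]
  rw [expand, expand]
  ring

theorem sum_sum_mul_mul_sub_sq (hp : ∑ x, p x = 1) (g : α → ℝ) :
    ∑ y, ∑ z, p y * p z * (g y - g z) ^ 2 = 2 * ∑ x, p x * (g x - ∑ y, p y * g y) ^ 2 := by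
  have inner : ∀ y, ∑ z, p y * p z * (g y - g z) ^ 2
      = p y * (∑ x, p x * (g x - ∑ y, p y * g y) ^ 2 + (∑ x, p x * g x - g y) ^ 2) := by
    intro y
    rw [← sum_mul_sub_sq_eq_add hp, mul_sum]
    exact sum_congr rfl fun z _ => by ring
  simp_rw [inner, mul_add, sum_add_distrib, ← sum_mul, hp, one_mul]
  conv_rhs => rw [two_mul]
  congr 1
  exact sum_congr rfl fun x _ => by ring

/-- Law of total variance for the mixture `p ᵥ* Q` of the rows of `Q`, with the variance of the
row means written in pairwise form. -/
theorem sum_vecMul_mul_sub_sq {β : Type*} [Fintype β] (hp : ∑ y, p y = 1) {Q : Matrix α β ℝ}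
    (hQ : ∀ y, ∑ x, Q y x = 1) (g : β → ℝ) :
    ∑ x, (p ᵥ* Q) x * (g x - ∑ y, p y * ∑ x, Q y x * g x) ^ 2 =
      ∑ y, p y * ∑ x, Q y x * (g x - ∑ x', Q y x' * g x') ^ 2 +
        1 / 2 * ∑ y, ∑ z, p y * p z * (∑ x, Q y x * g x - ∑ x, Q z x * g x) ^ 2 := by
  rw [sum_sum_mul_mul_sub_sq hp, ← mul_assoc, one_div_mul_cancel two_ne_zero, one_mul,
    ← sum_add_distrib]
  simp_rw [← mul_add, ← sum_mul_sub_sq_eq_add (hQ _), vecMul, dotProduct, sum_mul, mul_sum]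
  rw [sum_comm]
  exact sum_congr rfl fun y _ => sum_congr rfl fun x _ => by ring

end WeightedSums

theorem sum_sq_le_card_mul_sq_mul_sum_sq_of_sum_abs_le {κ : Type*} [Fintype κ] {x y : κ → ℝ} {c : ℝ}
    (h : ∑ i, |x i| ≤ c * ∑ i, |y i|) :
    ∑ i, x i ^ 2 ≤ Fintype.card κ * c ^ 2 * ∑ i, y i ^ 2 :=
  calc ∑ i, x i ^ 2 = ∑ i, |x i| ^ 2 := by simp only [sq_abs]
    _ ≤ (∑ i, |x i|) ^ 2 := sum_sq_le_sq_sum_of_nonneg fun i _ => abs_nonneg _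
    _ ≤ (c * ∑ i, |y i|) ^ 2 := pow_le_pow_left₀ (sum_nonneg fun i _ => abs_nonneg _) h 2
    _ = c ^ 2 * (∑ i, |y i|) ^ 2 := mul_pow _ _ _
    _ ≤ c ^ 2 * (Fintype.card κ * ∑ i, |y i| ^ 2) := by gcongr; exact sq_sum_le_card_mul_sum_sq
    _ = Fintype.card κ * c ^ 2 * ∑ i, y i ^ 2 := by simp only [sq_abs]; ring

section Chain

variable {α : Type*} [Fintype α] [DecidableEq α] {m : ℕ} {P : Matrix α α ℝ} (ι : α → Fin m → ℝ)

theorem chainExp_zero (θ : α) : chainExp P ι 0 θ = ι θ := by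
  ext i
  simp [chainExp, one_apply]

theorem chainExp_succ (t : ℕ) (θ : α) (i : Fin m) :
    chainExp P ι (t + 1) θ i = ∑ y, P θ y * chainExp P ι t y i := by
  simp only [chainExp, pow_succ', mul_apply, sum_mul, mul_sum]
  rw [sum_comm]
  exact sum_congr rfl fun y _ => sum_congr rfl fun x _ => mul_assoc _ _ _

theorem chainVar_zero (θ : α) : chainVar P ι 0 θ = 0 := by
  simp [chainVar, chainExp_zero, one_apply]

theorem chainVar_eq_sum_coord (t : ℕ) (θ : α) :
    chainVar P ι t θ = ∑ i, ∑ x, (P ^ t) θ x * (ι x i - chainExp P ι t θ i) ^ 2 := by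
  simp_rw [chainVar, mul_sum]
  exact sum_comm

theorem chainVar_nonneg (hP : P ∈ rowStochastic ℝ α) (t : ℕ) (θ : α) : 0 ≤ chainVar P ι t θ :=
  sum_nonneg fun _ _ => mul_nonneg (nonneg_of_mem_rowStochastic (pow_mem hP t))
    (sum_nonneg fun _ _ => sq_nonneg _)

theorem chainVar_succ (hP : P ∈ rowStochastic ℝ α) (t : ℕ) (θ : α) :
    chainVar P ι (t + 1) θ = ∑ y, P θ y * chainVar P ι t y +
      1 / 2 * ∑ y, ∑ z, P θ y * P θ z * ∑ i, (chainExp P ι t y i - chainExp P ι t z i) ^ 2 := by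
  have coord (i : Fin m) := sum_vecMul_mul_sub_sq (sum_row_of_mem_rowStochastic hP θ)
    (sum_row_of_mem_rowStochastic (pow_mem hP t)) (fun x => ι x i)
  simp_rw [← mul_apply_eq_vecMul, ← pow_succ'] at coord
  simp_rw [chainVar_eq_sum_coord, chainExp_succ, chainExp, coord, sum_add_distrib, mul_sum]
  congr 1
  · rw [sum_comm]
  · rw [sum_comm]
    exact sum_congr rfl fun _ _ => sum_comm

theorem chainVar_one (hP : P ∈ rowStochastic ℝ α) (θ : α) :
    chainVar P ι 1 θ = 1 / 2 * ∑ y, ∑ z, P θ y * P θ z * ∑ i, (ι y i - ι z i) ^ 2 := by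
  simp [chainVar_succ ι hP 0, chainVar_zero, chainExp_zero]

theorem chainVar_succ_le (hP : P ∈ rowStochastic ℝ α) {s : ℕ} {c : ℝ}
    (hcontr : ∀ y z, ∑ i, |chainExp P ι s y i - chainExp P ι s z i| ≤ c * ∑ i, |ι y i - ι z i|)
    (θ : α) :
    chainVar P ι (s + 1) θ ≤ (⨆ y, chainVar P ι s y) + m * c ^ 2 * chainVar P ι 1 θ := by
  have hPθ (y z : α) : 0 ≤ P θ y * P θ z :=
    mul_nonneg (nonneg_of_mem_rowStochastic hP) (nonneg_of_mem_rowStochastic hP)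
  rw [chainVar_succ ι hP, chainVar_one ι hP]
  gcongr ?_ + ?_
  · calc ∑ y, P θ y * chainVar P ι s y ≤ ∑ y, P θ y * ⨆ y, chainVar P ι s y := by
          gcongr with y
          · exact nonneg_of_mem_rowStochastic hP
          · exact le_ciSup (Set.finite_range _).bddAbove y
      _ = ⨆ y, chainVar P ι s y := by rw [← sum_mul, sum_row_of_mem_rowStochastic hP, one_mul]
  · calc 1 / 2 * ∑ y, ∑ z, P θ y * P θ z * ∑ i, (chainExp P ι s y i - chainExp P ι s z i) ^ 2
        ≤ 1 / 2 * ∑ y, ∑ z, P θ y * P θ z * (m * c ^ 2 * ∑ i, (ι y i - ι z i) ^ 2) := by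
          gcongr with y _ z _
          · exact hPθ y z
          · simpa using sum_sq_le_card_mul_sq_mul_sum_sq_of_sum_abs_le (hcontr y z)
      _ = m * c ^ 2 * (1 / 2 * ∑ y, ∑ z, P θ y * P θ z * ∑ i, (ι y i - ι z i) ^ 2) := by
          simp only [mul_sum]
          exact sum_congr rfl fun y _ => sum_congr rfl fun z _ => sum_congr rfl fun i _ => by ring

theorem iSup_chainVar_le_geom_sum (hP : P ∈ rowStochastic ℝ α) {r : ℝ}
    (hcontr : ∀ (θ θ' : α) (t : ℕ),
      ∑ i, |chainExp P ι t θ i - chainExp P ι t θ' i| ≤ r ^ t * ∑ i, |ι θ i - ι θ' i|)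
    (t : ℕ) :
    ⨆ θ, chainVar P ι t θ ≤ m * (⨆ θ, chainVar P ι 1 θ) * ∑ k ∈ range t, (r ^ 2) ^ k := by
  have hV₁ : 0 ≤ ⨆ θ, chainVar P ι 1 θ := Real.iSup_nonneg (chainVar_nonneg ι hP 1)
  induction t with
  | zero => simp [chainVar_zero]
  | succ s ih =>
    refine Real.iSup_le (fun θ => ?_) (by positivity)
    calc chainVar P ι (s + 1) θ ≤ (⨆ y, chainVar P ι s y) + m * (r ^ s) ^ 2 * chainVar P ι 1 θ :=
          chainVar_succ_le ι hP (fun y z => hcontr y z s) θ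
      _ ≤ m * (⨆ θ, chainVar P ι 1 θ) * ∑ k ∈ range s, (r ^ 2) ^ k +
            m * (r ^ s) ^ 2 * ⨆ θ, chainVar P ι 1 θ := by
          gcongr
          exact le_ciSup (Set.finite_range _).bddAbove θ
      _ = m * (⨆ θ, chainVar P ι 1 θ) * ∑ k ∈ range (s + 1), (r ^ 2) ^ k := by
          rw [sum_range_succ, ← pow_mul, ← pow_mul, mul_comm s 2]
          ring

end Chain

theorem geom_sum_le_min {q : ℝ} (hq₀ : 0 ≤ q) (hq₁ : q < 1) (t : ℕ) :
    ∑ k ∈ range t, q ^ k ≤ min (t : ℝ) (1 - q)⁻¹ := by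
  refine le_min ?_ ?_
  · calc ∑ k ∈ range t, q ^ k ≤ ∑ _k ∈ range t, (1 : ℝ) :=
          sum_le_sum fun k _ => pow_le_one₀ hq₀ hq₁.le
      _ = t := by simp
  · rw [range_eq_Ico]
    simpa using geom_sum_Ico_le_of_lt_one (m := 0) (n := t) hq₀ hq₁

theorem variance_bound_of_contraction_general {α : Type*} [Fintype α] [DecidableEq α] {m : ℕ}
    (P : Matrix α α ℝ) (hP_nonneg : ∀ x y, 0 ≤ P x y) (hP_row : ∀ x, ∑ y, P x y = 1)
    (ι : α → Fin m → ℝ)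
    (r : ℝ) (hr0 : 0 < r) (hr1 : r < 1)
    (hcontr : ∀ (θ θ' : α) (t : ℕ),
      ∑ i, |chainExp P ι t θ i - chainExp P ι t θ' i| ≤ r ^ t * ∑ i, |ι θ i - ι θ' i|) :
    ∀ t : ℕ, (⨆ θ, chainVar P ι t θ) ≤
      m * (⨆ θ, chainVar P ι 1 θ) * min (t : ℝ) (1 - r ^ 2)⁻¹ := by
  intro t
  have hP : P ∈ rowStochastic ℝ α := mem_rowStochastic_iff_sum.2 ⟨hP_nonneg, hP_row⟩
  have hr2 : r ^ 2 < 1 := pow_lt_one₀ hr0.le hr1 two_ne_zero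
  calc ⨆ θ, chainVar P ι t θ
      ≤ m * (⨆ θ, chainVar P ι 1 θ) * ∑ k ∈ range t, (r ^ 2) ^ k :=
        iSup_chainVar_le_geom_sum ι hP hcontr t
    _ ≤ m * (⨆ θ, chainVar P ι 1 θ) * min (t : ℝ) (1 - r ^ 2)⁻¹ := by
        have hV₁ := Real.iSup_nonneg (chainVar_nonneg ι hP 1)
        gcongr
        exact geom_sum_le_min (sq_nonneg r) hr2 t

/-- If the expectations of a Markov chain on a finite subset of ℝ^m contract in ℓ¹ at
rate rᵗ, then sup_θ Var_θ(Z_t) ≤ m (sup_θ Var_θ(Z₁)) min{t, (1-r²)⁻¹}. -/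
theorem variance_bound_of_contraction {α : Type*} [Fintype α] [DecidableEq α] [Nonempty α] {m : ℕ}
    (P : Matrix α α ℝ) (hP_nonneg : ∀ x y, 0 ≤ P x y) (hP_row : ∀ x, ∑ y, P x y = 1)
    (ι : α → Fin m → ℝ) (hι : Function.Injective ι)
    (r : ℝ) (hr0 : 0 < r) (hr1 : r < 1)
    (hcontr : ∀ (θ θ' : α) (t : ℕ),
      ∑ i, |chainExp P ι t θ i - chainExp P ι t θ' i| ≤ r ^ t * ∑ i, |ι θ i - ι θ' i|) :
    ∀ t : ℕ, (⨆ θ, chainVar P ι t θ) ≤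
      m * (⨆ θ, chainVar P ι 1 θ) * min (t : ℝ) (1 - r ^ 2)⁻¹ :=
  variance_bound_of_contraction_general P hP_nonneg hP_row ι r hr0 hr1 hcontr
end

section
/- Let p₁,…,p_m > 0 with Σᵢ pᵢ = 1, let β > 0, and let a = (a₁,…,a_m) be the positive ℓ¹-normalized left Perron eigenvector of the matrix A with diagonal entries 1 - 1/n and off-diagonal (i,j) entries β pᵢ/n. Define β_cr := 1/((m-1) Σᵢ aᵢ pᵢ). Then β_cr = (Σᵢ aᵢ² pᵢ) / ((Σᵢ aᵢ pᵢ)² - Σᵢ aᵢ² pᵢ²). -/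
/-!
Reading off coordinate `k` of the eigen-equation `aᵀA = g aᵀ` shows that
`S - aₖpₖ = λ aₖ` for every `k`, where `S = Σᵢ aᵢpᵢ` and `λ = n(g - 1 + 1/n)/β`.
Summing over `k` gives `(m - 1) S = λ`, i.e. `β_cr = 1/λ`; multiplying by `aₖpₖ` first and
then summing gives `S² - Σᵢ aᵢ²pᵢ² = λ Σᵢ aᵢ²pᵢ`.
-/

open Finset

section

variable {ι R : Type*} [Fintype ι]

theorem vecMul_apply_of_apply_eq_ite [CommRing R] [DecidableEq ι] {A : Matrix ι ι R} {d c : R}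
    {p : ι → R} (hA : ∀ i j, A i j = if i = j then d else c * p i) (a : ι → R) (k : ι) :
    Matrix.vecMul a A k = d * a k + c * (∑ i, a i * p i - a k * p k) := by
  have hterm : ∀ i, a i * A i k = c * (a i * p i) + if i = k then a k * (d - c * p k) else 0 := by
    intro i
    rw [hA]
    split_ifs with hik
    · subst hik; ring
    · ring
  simp only [Matrix.vecMul, dotProduct, hterm, sum_add_distrib, ← mul_sum, sum_ite_eq',
    mem_univ, if_true]
  ring

theorem sum_mul_sub_eq_of_vecMul_eq_smul [Field R] [DecidableEq ι] {A : Matrix ι ι R}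
    {d c g : R} {p a : ι → R} (hA : ∀ i j, A i j = if i = j then d else c * p i) (hc : c ≠ 0)
    (ha : Matrix.vecMul a A = g • a) (k : ι) :
    ∑ i, a i * p i - a k * p k = (g - d) / c * a k := by
  have hk := congrFun ha k
  rw [vecMul_apply_of_apply_eq_ite hA, Pi.smul_apply, smul_eq_mul] at hk
  field_simp
  linear_combination hk

variable [CommRing R] {p a : ι → R} {r : R}

theorem card_sub_one_mul_sum_mul_eq
    (h : ∀ k, ∑ i, a i * p i - a k * p k = r * a k) :
    ((Fintype.card ι : R) - 1) * ∑ i, a i * p i = r * ∑ i, a i := by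
  rw [mul_sum (s := univ) (f := a), ← sum_congr rfl fun k _ => h k, sum_sub_distrib, sum_const, card_univ,
    nsmul_eq_mul]
  ring

theorem sq_sum_mul_sub_sum_sq_mul_sq_eq
    (h : ∀ k, ∑ i, a i * p i - a k * p k = r * a k) :
    (∑ i, a i * p i) ^ 2 - ∑ i, a i ^ 2 * p i ^ 2 = r * ∑ i, a i ^ 2 * p i := by
  calc (∑ i, a i * p i) ^ 2 - ∑ i, a i ^ 2 * p i ^ 2
      = ∑ k, a k * p k * (∑ i, a i * p i - a k * p k) := by
        rw [sq, sum_mul, ← sum_sub_distrib]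
        exact sum_congr rfl fun k _ => by ring
    _ = r * ∑ i, a i ^ 2 * p i := by
        rw [mul_sum]
        exact sum_congr rfl fun k _ => by rw [h k]; ring

end

theorem beta_cr_characterization_general {m n : ℕ} (hn : 1 ≤ n)
    (p : Fin m → ℝ) (hp : ∀ i, 0 < p i)
    (β : ℝ) (hβ : 0 < β)
    (A : Matrix (Fin m) (Fin m) ℝ)
    (hA : ∀ i j, A i j = if i = j then 1 - 1 / (n : ℝ) else β * p i / n)
    (g : ℝ) (a : Fin m → ℝ) (ha_pos : ∀ i, 0 < a i) (ha1 : ∑ i, a i = 1)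
    (ha : Matrix.vecMul a A = g • a) :
    1 / (((m : ℝ) - 1) * ∑ i, a i * p i) =
      (∑ i, a i ^ 2 * p i) / ((∑ i, a i * p i) ^ 2 - ∑ i, a i ^ 2 * p i ^ 2) := by
  have hA' : ∀ i j, A i j = if i = j then 1 - 1 / (n : ℝ) else β / n * p i := by
    simpa only [mul_div_right_comm] using hA
  have hc : β / n ≠ 0 := div_ne_zero hβ.ne' (by positivity)
  have hrel := sum_mul_sub_eq_of_vecMul_eq_smul hA' hc ha
  have hT : 0 < ∑ i, a i ^ 2 * p i :=
    sum_pos (fun i _ => mul_pos (pow_pos (ha_pos i) 2) (hp i))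
      (nonempty_of_sum_ne_zero (ha1.symm ▸ one_ne_zero))
  have hcard := card_sub_one_mul_sum_mul_eq hrel
  rw [Fintype.card_fin, ha1, mul_one] at hcard
  rw [hcard, sq_sum_mul_sub_sum_sq_mul_sq_eq hrel, div_mul_cancel_right₀ hT.ne', one_div]

/-- Alternative characterization of the critical temperature:
1/((m-1) Σᵢ aᵢpᵢ) = (Σᵢ aᵢ²pᵢ) / ((Σᵢ aᵢpᵢ)² - Σᵢ aᵢ²pᵢ²), where a is the positive
ℓ¹-normalized left Perron eigenvector of A. -/
theorem beta_cr_characterization {m n : ℕ} (hm : 2 ≤ m) (hn : 1 ≤ n)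
    (p : Fin m → ℝ) (hp : ∀ i, 0 < p i) (hp1 : ∑ i, p i = 1)
    (β : ℝ) (hβ : 0 < β)
    (A : Matrix (Fin m) (Fin m) ℝ)
    (hA : ∀ i j, A i j = if i = j then 1 - 1 / (n : ℝ) else β * p i / n)
    (g : ℝ) (a : Fin m → ℝ) (ha_pos : ∀ i, 0 < a i) (ha1 : ∑ i, a i = 1)
    (ha : Matrix.vecMul a A = g • a) :
    1 / (((m : ℝ) - 1) * ∑ i, a i * p i) =
      (∑ i, a i ^ 2 * p i) / ((∑ i, a i * p i) ^ 2 - ∑ i, a i ^ 2 * p i ^ 2) :=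
  beta_cr_characterization_general hn p hp β hβ A hA g a ha_pos ha1 ha
end
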